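/- Let G be a finite non-cyclic group and s the number of maximal cyclic subgroups of G. Then the clique number and the chromatic number of the non-cyclic graph Γ_G both equal s. -/
import Mathlib


/-- `Cyc(G)`. -/
def cycSet (G : Type*) [Group G] : Set G :=
  {y | ∀ x : G, IsCyclic ↥(Subgroup.closure ({x, y} : Set G))}

namespace NonCyclicGraphAux

variable {G : Type*} [Group G]

/-- The type of maximal cyclic subgroups. -/
abbrev MaxCyc (G : Type*) [Group G] :=
  {H : Subgroup G // IsCyclic H ∧ ∀ K : Subgroup G, IsCyclic K → H ≤ K → H = K}

lemma isCyclic_of_le {K H : Subgroup G} (h : K ≤ H) (hH : IsCyclic H) : IsCyclic K := by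
  haveI := hH
  exact isCyclic_of_surjective (Subgroup.subgroupOfEquivOfLe h)
    (Subgroup.subgroupOfEquivOfLe h).surjective

lemma closure_pair_le {x y : G} {H : Subgroup G} (hx : x ∈ H) (hy : y ∈ H) :
    Subgroup.closure ({x, y} : Set G) ≤ H := by
  rw [Subgroup.closure_le]
  intro z hz
  rcases hz with h | h
  · exact h ▸ hx
  · exact Set.mem_singleton_iff.mp h ▸ hy

lemma exists_maxCyc [Finite G] (x : G) : ∃ H : MaxCyc G, x ∈ H.1 := by
  have hz : IsCyclic ↥(Subgroup.zpowers x) := by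
    refine ⟨⟨⟨x, Subgroup.mem_zpowers x⟩, ?_⟩⟩
    intro y
    obtain ⟨k, hk⟩ := Subgroup.mem_zpowers_iff.mp y.2
    exact ⟨k, Subtype.ext (by simpa using hk)⟩
  obtain ⟨H, hle, hmax⟩ := Finite.exists_le_maximal
    (p := fun K : Subgroup G => IsCyclic K) (a := Subgroup.zpowers x) hz
  exact ⟨⟨H, hmax.1, fun K hK hle' => le_antisymm hle' (hmax.2 hK hle')⟩,
    hle (Subgroup.mem_zpowers x)⟩

lemma exists_gen (H : Subgroup G) (hH : IsCyclic H) : ∃ g : G, Subgroup.zpowers g = H := by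
  obtain ⟨⟨g, hg⟩, hgen⟩ := hH.exists_generator
  refine ⟨g, le_antisymm (Subgroup.zpowers_le.mpr hg) ?_⟩
  intro x hx
  obtain ⟨k, hk⟩ := hgen ⟨x, hx⟩
  have : ((⟨g, hg⟩ : H) ^ k : H).1 = x := congrArg Subtype.val hk
  exact ⟨k, by simpa using this⟩

end NonCyclicGraphAux

open NonCyclicGraphAux in
/-- For a finite non-cyclic group `G`, the clique number and the chromatic
number of the non-cyclic graph both equal the number `s` of maximal cyclic
subgroups of `G`. -/
theorem clique_and_chromatic_number_eq_max_cyclic {G : Type*} [Group G]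
    [Fintype G] (hG : ¬ IsCyclic G) (s : ℕ)
    (hs : s = Nat.card {H : Subgroup G // IsCyclic H ∧
      ∀ K : Subgroup G, IsCyclic K → H ≤ K → H = K}) :
    IsGreatest {k : ℕ | ∃ S : Finset G, (S : Set G) ⊆ (Set.univ \ cycSet G) ∧
      (∀ x ∈ S, ∀ y ∈ S, x ≠ y → ¬ IsCyclic ↥(Subgroup.closure ({x, y} : Set G))) ∧
      S.card = k} s ∧
    IsLeast {k : ℕ | ∃ f : G → Fin k, ∀ x y : G,
      x ∉ cycSet G → y ∉ cycSet G → x ≠ y →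
      ¬ IsCyclic ↥(Subgroup.closure ({x, y} : Set G)) → f x ≠ f y} s := by
  classical
  haveI : Fintype (MaxCyc G) := Fintype.ofFinite _
  -- every element lies in a maximal cyclic subgroup
  choose F hF using fun x : G => exists_maxCyc x
  -- generators of maximal cyclic subgroups
  choose g hg using fun H : MaxCyc G => exists_gen H.1 H.2.1
  have ginj : Function.Injective g := fun H K h => Subtype.ext (by rw [← hg H, ← hg K, h])
  -- there are at least two maximal cyclic subgroups
  have two : ∀ H : MaxCyc G, ∃ K : MaxCyc G, K ≠ H := by
    intro H
    by_contra h
    push_neg at h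
    apply hG
    have htop : H.1 = ⊤ := by
      rw [eq_top_iff]
      intro x _
      have := hF x
      rwa [h (F x)] at this
    have : IsCyclic (⊤ : Subgroup G) := htop ▸ H.2.1
    exact isCyclic_of_surjective Subgroup.topEquiv Subgroup.topEquiv.surjective
  -- generators of distinct maximal cyclic subgroups are adjacent
  have adj : ∀ H K : MaxCyc G, H ≠ K →
      ¬ IsCyclic ↥(Subgroup.closure ({g H, g K} : Set G)) := by
    intro H K hne hcyc
    have h1 : H.1 ≤ Subgroup.closure ({g H, g K} : Set G) := by
      rw [← hg H, Subgroup.zpowers_le]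
      exact Subgroup.subset_closure (Set.mem_insert _ _)
    have h2 : K.1 ≤ Subgroup.closure ({g H, g K} : Set G) := by
      rw [← hg K, Subgroup.zpowers_le]
      exact Subgroup.subset_closure (Set.mem_insert_of_mem _ rfl)
    exact hne (Subtype.ext ((H.2.2 _ hcyc h1).trans (K.2.2 _ hcyc h2).symm))
  -- generators are not in Cyc(G)
  have gnc : ∀ H : MaxCyc G, g H ∉ cycSet G := by
    intro H hc
    obtain ⟨K, hK⟩ := two H
    exact adj K H hK (hc (g K))
  -- the clique of generators
  set S : Finset G := Finset.univ.image g with hS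
  have hScard : S.card = s := by
    rw [hS, Finset.card_image_of_injective _ ginj, Finset.card_univ,
      ← Nat.card_eq_fintype_card, hs]
  have hSmem : ∀ x ∈ S, ∃ H : MaxCyc G, g H = x := by
    intro x hx
    obtain ⟨H, _, h⟩ := Finset.mem_image.mp hx
    exact ⟨H, h⟩
  have hSclique : ∀ x ∈ S, ∀ y ∈ S, x ≠ y →
      ¬ IsCyclic ↥(Subgroup.closure ({x, y} : Set G)) := by
    intro x hx y hy hne
    obtain ⟨H, rfl⟩ := hSmem x hx
    obtain ⟨K, rfl⟩ := hSmem y hy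
    exact adj H K (fun h => hne (congrArg g h))
  constructor
  · constructor
    · -- s is achieved as a clique
      refine ⟨S, ?_, hSclique, hScard⟩
      intro x hx
      obtain ⟨H, rfl⟩ := hSmem x hx
      exact ⟨trivial, gnc H⟩
    · -- upper bound for cliques
      rintro k ⟨T, -, hadj, rfl⟩
      have : T.card ≤ (Finset.univ : Finset (MaxCyc G)).card := by
        apply Finset.card_le_card_of_injOn (fun x => F x)
          (fun x _ => Finset.mem_univ _)
        intro x hx y hy hxy
        by_contra hne
        apply hadj x hx y hy hne
        have hxy' : F x = F y := hxy
        have hy' : y ∈ (F x).1 := by rw [hxy']; exact hF y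
        exact isCyclic_of_le (closure_pair_le (hF x) hy') (F x).2.1
      rwa [Finset.card_univ, ← Nat.card_eq_fintype_card, ← hs] at this
  · constructor
    · -- a proper coloring with s colors
      have e : MaxCyc G ≃ Fin s :=
        Fintype.equivFinOfCardEq (by rw [← Nat.card_eq_fintype_card, ← hs])
      refine ⟨fun x => e (F x), ?_⟩
      intro x y _ _ _ hncyc hfeq
      apply hncyc
      have hFeq : F x = F y := e.injective hfeq
      exact isCyclic_of_le (closure_pair_le (hF x) (hFeq ▸ hF y)) (F x).2.1
    · -- lower bound for colorings
      rintro k ⟨f, hf⟩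
      have : S.card ≤ (Finset.univ : Finset (Fin k)).card := by
        apply Finset.card_le_card_of_injOn f (fun x _ => Finset.mem_univ _)
        intro x hx y hy hxy
        by_contra hne
        obtain ⟨H, hH⟩ := hSmem x hx
        obtain ⟨K, hK⟩ := hSmem y hy
        exact hf x y (hH ▸ gnc H) (hK ▸ gnc K) hne (hSclique x hx y hy hne) hxy
      rwa [hScard, Finset.card_univ, Fintype.card_fin] at this
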